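/- Localization of the threshold estimator (Lemma A.8): Fix λ > 0, 0 < μ < 1, ε > 0, C1, C2, C4 > 0, s0 ∈ ℕ. Suppose: (a) Y_i = X_i(τ0)'α0 + U_i with α0 ∈ B, |α0|_∞ ≤ C1, M(α0) ≤ s0, τ0 ∈ T; (b) (α̂,τ̂) ∈ B×T satisfies the minimizer property of the threshold Lasso; (c) max_{1≤j≤p} ||X^{(j)}||_n² ≤ C2² + ε; (d) the noise condition NC(μ): |n^{-1} Σ_i U_i X_i^{(j)}(τ)| ≤ (μλ/2)·||X^{(j)}(τ)||_n for all j ≤ 2p, τ ∈ T; and (e) the identifiability condition at the estimator: ||f̂ − f0||_n² > C4·η for every η with 0 < η < |τ̂ − τ0|. Then |τ̂ − τ0| ≤ η*, where η* := (2·C1·(3+μ)·√(C2² + ε)·s0·λ)/C4. -/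
import Mathlib


open Finset

noncomputable section

variable {n p : ℕ}

/-- The indicator `1{Q_i < τ}` as a real number. -/
def ind01 {n : ℕ} (Q : Fin n → ℝ) (τ : ℝ) (i : Fin n) : ℝ :=
  if Q i < τ then 1 else 0

/-- The `j`-th column of the threshold design matrix `X(τ)`:
the first `p` columns are the plain columns of `X`, the last `p` columns are
the columns of `X` multiplied by the indicator `1{Q_i < τ}`. -/
def tcol (X : Fin n → Fin p → ℝ) (Q : Fin n → ℝ) (τ : ℝ) (j : Fin p ⊕ Fin p)
    (i : Fin n) : ℝ :=
  Sum.elim (fun l => X i l) (fun l => if Q i < τ then X i l else 0) j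

/-- Squared empirical norm `‖v‖ₙ² = n⁻¹ ∑ᵢ vᵢ²`. -/
def enorm2 (n : ℕ) (v : Fin n → ℝ) : ℝ := (n : ℝ)⁻¹ * ∑ i, v i ^ 2

/-- Empirical norm `‖v‖ₙ`. -/
def enormn (n : ℕ) (v : Fin n → ℝ) : ℝ := Real.sqrt (enorm2 n v)

/-- Value of the regression function `f_(α,τ)` at the `i`-th observation. -/
def tfit (X : Fin n → Fin p → ℝ) (Q : Fin n → ℝ) (α : Fin p ⊕ Fin p → ℝ) (τ : ℝ)
    (i : Fin n) : ℝ :=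
  ∑ j, tcol X Q τ j i * α j

/-- Least-squares criterion `S_n(α,τ)`. -/
def Sn (X : Fin n → Fin p → ℝ) (Q Y : Fin n → ℝ) (α : Fin p ⊕ Fin p → ℝ) (τ : ℝ) : ℝ :=
  enorm2 n (fun i => Y i - tfit X Q α τ i)

/-- Weighted ℓ¹ penalty `|D(τ)α|₁ = ∑ⱼ ‖X⁽ʲ⁾(τ)‖ₙ |αⱼ|`. -/
def penD (X : Fin n → Fin p → ℝ) (Q : Fin n → ℝ) (α : Fin p ⊕ Fin p → ℝ) (τ : ℝ) : ℝ :=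
  ∑ j, enormn n (tcol X Q τ j) * |α j|

/-- Support `J(α)` of a coefficient vector. -/
def suppA {p : ℕ} (α : Fin p ⊕ Fin p → ℝ) : Finset (Fin p ⊕ Fin p) :=
  Finset.univ.filter fun j => α j ≠ 0

/-- The Lasso minimizer property over `B × T`, with
`B = {α : |α|_∞ ≤ C1}` and `T = [t0, t1]`. -/
def MinimizerProp (X : Fin n → Fin p → ℝ) (Q Y : Fin n → ℝ) (C1 lam t0 t1 : ℝ)
    (αh : Fin p ⊕ Fin p → ℝ) (τh : ℝ) : Prop :=
  ∀ α : Fin p ⊕ Fin p → ℝ, (∀ j, |α j| ≤ C1) → ∀ τ ∈ Set.Icc t0 t1,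
    Sn X Q Y αh τh + lam * penD X Q αh τh ≤ Sn X Q Y α τ + lam * penD X Q α τ

/-- The noise condition NC(μ):
`|n⁻¹ ∑ᵢ Uᵢ Xᵢ⁽ʲ⁾(τ)| ≤ (μλ/2)‖X⁽ʲ⁾(τ)‖ₙ` for all `j ≤ 2p` and `τ ∈ T`. -/
def NoiseCond (X : Fin n → Fin p → ℝ) (Q U : Fin n → ℝ) (mu lam t0 t1 : ℝ) : Prop :=
  ∀ j : Fin p ⊕ Fin p, ∀ τ ∈ Set.Icc t0 t1,
    |(n : ℝ)⁻¹ * ∑ i, U i * tcol X Q τ j i| ≤ mu * lam / 2 * enormn n (tcol X Q τ j)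


lemma enorm2_nonneg (n : ℕ) (v : Fin n → ℝ) : 0 ≤ enorm2 n v := by
  unfold enorm2
  positivity

lemma enormn_nonneg (n : ℕ) (v : Fin n → ℝ) : 0 ≤ enormn n v := Real.sqrt_nonneg _

lemma penD_nonneg (X : Fin n → Fin p → ℝ) (Q : Fin n → ℝ) (α : Fin p ⊕ Fin p → ℝ)
    (τ : ℝ) : 0 ≤ penD X Q α τ := by
  unfold penD
  exact Finset.sum_nonneg fun j _ => mul_nonneg (enormn_nonneg _ _) (abs_nonneg _)

lemma enorm2_tcol_le (X : Fin n → Fin p → ℝ) (Q : Fin n → ℝ) (τ : ℝ) (C : ℝ)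
    (hcol : ∀ j : Fin p, enorm2 n (fun i => X i j) ≤ C) (j : Fin p ⊕ Fin p) :
    enorm2 n (tcol X Q τ j) ≤ C := by
  cases j with
  | inl l => exact hcol l
  | inr l =>
    refine le_trans ?_ (hcol l)
    unfold enorm2 tcol
    refine mul_le_mul_of_nonneg_left (Finset.sum_le_sum fun i _ => ?_) (by positivity)
    simp only [Sum.elim_inr]
    split
    · exact le_rfl
    · simpa using sq_nonneg (X i l)

lemma inner_bound (X : Fin n → Fin p → ℝ) (Q U : Fin n → ℝ) (mu lam t0 t1 : ℝ)
    (hNC : NoiseCond X Q U mu lam t0 t1) (α : Fin p ⊕ Fin p → ℝ) (τ : ℝ)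
    (hτ : τ ∈ Set.Icc t0 t1) :
    |∑ j, α j * ((n : ℝ)⁻¹ * ∑ i, U i * tcol X Q τ j i)| ≤ mu * lam / 2 * penD X Q α τ := by
  refine le_trans (Finset.abs_sum_le_sum_abs _ _) ?_
  unfold penD
  rw [Finset.mul_sum]
  refine Finset.sum_le_sum fun j _ => ?_
  rw [abs_mul]
  calc |α j| * |(n : ℝ)⁻¹ * ∑ i, U i * tcol X Q τ j i|
      ≤ |α j| * (mu * lam / 2 * enormn n (tcol X Q τ j)) :=
        mul_le_mul_of_nonneg_left (hNC j τ hτ) (abs_nonneg _)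
    _ = mu * lam / 2 * (enormn n (tcol X Q τ j) * |α j|) := by ring

/-- Localization of the threshold estimator (Lemma A.8). -/
theorem stmt10 {n p : ℕ} (X : Fin n → Fin p → ℝ) (Q U Y : Fin n → ℝ)
    (α0 αhat : Fin p ⊕ Fin p → ℝ) (τ0 τhat t0 t1 lam mu ε C1 C2 C4 : ℝ) (s0 : ℕ)
    (hlam : 0 < lam) (hmu0 : 0 < mu) (hmu1 : mu < 1) (hε : 0 < ε)
    (hC1 : 0 < C1) (hC2 : 0 < C2) (hC4 : 0 < C4)
    -- (a) the data equation, with α0 ∈ B sparse and τ0 ∈ T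
    (hdata : ∀ i, Y i = tfit X Q α0 τ0 i + U i)
    (hα0B : ∀ j, |α0 j| ≤ C1) (hsupp : (suppA α0).card ≤ s0) (hτ0 : τ0 ∈ Set.Icc t0 t1)
    -- (b) (α̂, τ̂) ∈ B × T satisfies the minimizer property of the threshold Lasso
    (hαhB : ∀ j, |αhat j| ≤ C1) (hτh : τhat ∈ Set.Icc t0 t1)
    (hmin : MinimizerProp X Q Y C1 lam t0 t1 αhat τhat)
    -- (c) bound on the plain design columns
    (hcol : ∀ j : Fin p, enorm2 n (fun i => X i j) ≤ C2 ^ 2 + ε)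
    -- (d) the noise condition NC(μ)
    (hNC : NoiseCond X Q U mu lam t0 t1)
    -- (e) identifiability at the estimator
    (hident : ∀ η : ℝ, 0 < η → η < |τhat - τ0| →
      C4 * η < enorm2 n (fun i => tfit X Q αhat τhat i - tfit X Q α0 τ0 i)) :
    |τhat - τ0| ≤ 2 * C1 * (3 + mu) * Real.sqrt (C2 ^ 2 + ε) * s0 * lam / C4 := by
  classical
  -- abbreviations
  set w : Fin n → ℝ := fun i => tfit X Q αhat τhat i - tfit X Q α0 τ0 i with hw
  set cross : ℝ := (n : ℝ)⁻¹ * ∑ i, U i * w i with hcrossdef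
  have hsqrtnn : 0 ≤ Real.sqrt (C2 ^ 2 + ε) := Real.sqrt_nonneg _
  -- the basic inequality from the minimizer property at (α0, τ0)
  have hBineq := hmin α0 hα0B τ0 hτ0
  -- algebraic identity
  have hiden : Sn X Q Y αhat τhat = Sn X Q Y α0 τ0 + enorm2 n w - 2 * cross := by
    have hterm : ∀ i, (Y i - tfit X Q αhat τhat i) ^ 2
        = (Y i - tfit X Q α0 τ0 i) ^ 2 + w i ^ 2 - 2 * (U i * w i) := by
      intro i
      rw [hdata i]
      simp only [hw]
      ring
    simp only [Sn, enorm2, hcrossdef]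
    rw [Finset.sum_congr rfl fun i _ => hterm i]
    rw [Finset.sum_sub_distrib, Finset.sum_add_distrib]
    have h2 : ∑ i, 2 * (U i * w i) = 2 * ∑ i, U i * w i := by rw [Finset.mul_sum]
    rw [h2]
    ring
  -- cross term decomposition
  have hcross : cross = (∑ j, αhat j * ((n : ℝ)⁻¹ * ∑ i, U i * tcol X Q τhat j i))
      - ∑ j, α0 j * ((n : ℝ)⁻¹ * ∑ i, U i * tcol X Q τ0 j i) := by
    have h1 : ∀ (α : Fin p ⊕ Fin p → ℝ) (τ : ℝ),
        ∑ i, U i * tfit X Q α τ i = ∑ j, α j * ∑ i, U i * tcol X Q τ j i := by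
      intro α τ
      simp only [tfit, Finset.mul_sum]
      rw [Finset.sum_comm]
      refine Finset.sum_congr rfl fun j _ => Finset.sum_congr rfl fun i _ => by ring
    simp only [hcrossdef, hw]
    have : ∑ i, U i * (tfit X Q αhat τhat i - tfit X Q α0 τ0 i)
        = (∑ j, αhat j * ∑ i, U i * tcol X Q τhat j i)
          - ∑ j, α0 j * ∑ i, U i * tcol X Q τ0 j i := by
      rw [← h1, ← h1, ← Finset.sum_sub_distrib]
      exact Finset.sum_congr rfl fun i _ => by ring
    rw [this, mul_sub, Finset.mul_sum, Finset.mul_sum]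
    congr 1 <;> exact Finset.sum_congr rfl fun j _ => by ring
  -- bound the cross term
  have hib1 := inner_bound X Q U mu lam t0 t1 hNC αhat τhat hτh
  have hib0 := inner_bound X Q U mu lam t0 t1 hNC α0 τ0 hτ0
  have hcb : cross ≤ mu * lam / 2 * (penD X Q αhat τhat + penD X Q α0 τ0) := by
    rw [hcross]
    have h1 := le_abs_self (∑ j, αhat j * ((n : ℝ)⁻¹ * ∑ i, U i * tcol X Q τhat j i))
    have h2 := neg_abs_le (∑ j, α0 j * ((n : ℝ)⁻¹ * ∑ i, U i * tcol X Q τ0 j i))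
    linarith
  -- key bound on ‖f̂ - f0‖ₙ²
  have hpenh := penD_nonneg X Q αhat τhat
  have hkey : enorm2 n w ≤ (1 + mu) * lam * penD X Q α0 τ0 := by
    have h : enorm2 n w ≤ 2 * cross + lam * penD X Q α0 τ0 - lam * penD X Q αhat τhat := by
      have := hBineq
      rw [hiden] at this
      linarith
    nlinarith [mul_nonneg hlam.le hpenh]
  -- bound penD α0 τ0
  have hcolb : ∀ j : Fin p ⊕ Fin p,
      enormn n (tcol X Q τ0 j) ≤ Real.sqrt (C2 ^ 2 + ε) := fun j =>
    Real.sqrt_le_sqrt (enorm2_tcol_le X Q τ0 _ hcol j)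
  have hpen0 : penD X Q α0 τ0 ≤ Real.sqrt (C2 ^ 2 + ε) * C1 * s0 := by
    unfold penD
    have hsplit : ∑ j, enormn n (tcol X Q τ0 j) * |α0 j|
        = ∑ j ∈ suppA α0, enormn n (tcol X Q τ0 j) * |α0 j| := by
      refine (Finset.sum_subset (Finset.subset_univ _) fun j _ hj => ?_).symm
      simp only [suppA, Finset.mem_filter, Finset.mem_univ, true_and, not_not] at hj
      simp [hj]
    rw [hsplit]
    calc ∑ j ∈ suppA α0, enormn n (tcol X Q τ0 j) * |α0 j|
        ≤ ∑ _j ∈ suppA α0, Real.sqrt (C2 ^ 2 + ε) * C1 :=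
          Finset.sum_le_sum fun j _ =>
            mul_le_mul (hcolb j) (hα0B j) (abs_nonneg _) hsqrtnn
      _ = (suppA α0).card * (Real.sqrt (C2 ^ 2 + ε) * C1) := by
          rw [Finset.sum_const, nsmul_eq_mul]
      _ ≤ (s0 : ℝ) * (Real.sqrt (C2 ^ 2 + ε) * C1) := by
          refine mul_le_mul_of_nonneg_right ?_ (by positivity)
          exact_mod_cast hsupp
      _ = Real.sqrt (C2 ^ 2 + ε) * C1 * s0 := by ring
  -- combine
  have hfinal : enorm2 n w ≤ C4 * (2 * C1 * (3 + mu) * Real.sqrt (C2 ^ 2 + ε) * s0 * lam / C4) := by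
    rw [mul_div_cancel₀ _ (ne_of_gt hC4)]
    calc enorm2 n w ≤ (1 + mu) * lam * penD X Q α0 τ0 := hkey
      _ ≤ (1 + mu) * lam * (Real.sqrt (C2 ^ 2 + ε) * C1 * s0) := by
          refine mul_le_mul_of_nonneg_left hpen0 (by positivity)
      _ ≤ 2 * C1 * (3 + mu) * Real.sqrt (C2 ^ 2 + ε) * s0 * lam := by
          nlinarith [mul_nonneg (mul_nonneg hsqrtnn hC1.le) (Nat.cast_nonneg s0 : (0:ℝ) ≤ s0),
            mul_nonneg (mul_nonneg (mul_nonneg hsqrtnn hC1.le) (Nat.cast_nonneg s0 : (0:ℝ) ≤ s0)) hlam.le]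
  -- conclude by contradiction using identifiability
  set ηs : ℝ := 2 * C1 * (3 + mu) * Real.sqrt (C2 ^ 2 + ε) * s0 * lam / C4 with hηs
  have hηsnn : 0 ≤ ηs := by positivity
  by_contra hcon
  push_neg at hcon
  set η : ℝ := (ηs + |τhat - τ0|) / 2 with hη
  have hη1 : ηs < η := by simp only [hη]; linarith
  have hη2 : η < |τhat - τ0| := by simp only [hη]; linarith
  have hη0 : 0 < η := lt_of_le_of_lt hηsnn hη1
  have := hident η hη0 hη2
  have h2 : C4 * ηs < C4 * η := by
    exact mul_lt_mul_of_pos_left hη1 hC4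
  simp only [hw] at hfinal
  linarith


end
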